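/- arXiv:2602.21894 — 7 statements merged into one kernel-verified Lean document; each statement's English description precedes it below -/
import Mathlib

section
/- Dwork's lemma (variant with truncated Frobenius lifts): Let R be a commutative ring and m ≥ 1 an integer. Assume that for every prime number p dividing m there exists a ring homomorphism φ_p : R → R/p^{v_p(m)}R such that φ_p(x) ≡ x^p modulo pR for all x ∈ R. Then for every family (x_e)_{e|m} of elements of R indexed by the divisors of m, the following are equivalent: (1) there exists a family (b_d)_{d|m} of elements of R such that x_e = ∑_{d|e} d·b_d^{e/d} for every divisor e of m; (2) for every prime number p and every divisor e of m with p | e, one has x_e ≡ φ_p(x_{e/p}) in R/p^{v_p(e)}R, where φ_p(x_{e/p}) is reduced along the canonical projection R/p^{v_p(m)}R → R/p^{v_p(e)}R. -/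
/-!
Write `w_n(b) = ∑_{d ∣ n} d b_d^{n/d}` for the ghost components. If `c_d ≡ b_d^p (mod p)`, then
`w_{pn}(b) ≡ w_n(c) (mod p^{v_p(pn)})`: the divisors of `pn` not dividing `n` already carry the
full power of `p`, and for `d ∣ n` the congruence `c_d ≡ b_d^p` improves to one modulo
`p^{v_p(n/d)+1}` after raising to the power `n/d`. Lifting `φ_p(b_d)` to such `c_d`, this gives
(1) ⇒ (2). Conversely, the `b_e` are constructed by induction on `e ∣ m`: once `b_d` is fixed for
the proper divisors `d` of `e`, the congruences (2) at the primes `p ∣ e` together say that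
`x_e - w_e(b)` is divisible by `e`, so `b_e` can be corrected to make `x_e = w_e(b)`.
-/

/-- The canonical projection `R/p^a R → R/p^b R` for `b ≤ a`. -/
def padicProj {R : Type*} [CommRing R] (p : R) {a b : ℕ} (h : b ≤ a) :
    R ⧸ Ideal.span {p ^ a} →+* R ⧸ Ideal.span {p ^ b} :=
  Ideal.Quotient.factor (Ideal.span_singleton_le_span_singleton.mpr (pow_dvd_pow p h))

/-- Monotonicity of `p`-adic valuations along divisibility. -/
theorem factorization_le_of_dvd_aux {a b : ℕ} (hb : b ≠ 0) (h : a ∣ b) (p : ℕ) :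
    a.factorization p ≤ b.factorization p := by
  rcases eq_or_ne a 0 with rfl | ha
  · exact absurd (zero_dvd_iff.mp h) hb
  · exact (Nat.factorization_le_iff_dvd ha hb).mpr h p

section Ghost

variable {R : Type*} [CommRing R]

def ghostComponent (n : ℕ) (b : ℕ → R) : R :=
  ∑ d ∈ n.divisors, (d : R) * b d ^ (n / d)

theorem map_ghostComponent {S : Type*} [CommRing S] (f : R →+* S) (n : ℕ) (b : ℕ → R) :
    f (ghostComponent n b) = ghostComponent n (f ∘ b) := by
  simp [ghostComponent]

theorem ghostComponent_update_of_lt {n e : ℕ} (h : n < e) (b : ℕ → R) (y : R) :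
    ghostComponent n (Function.update b e y) = ghostComponent n b := by
  refine Finset.sum_congr rfl fun d hd => ?_
  rw [Function.update_of_ne (Nat.divisor_le hd |>.trans_lt h).ne]

theorem ghostComponent_update_self {n : ℕ} (hn : n ≠ 0) (b : ℕ → R) (y : R) :
    ghostComponent n (Function.update b n y) = ghostComponent n b + n * (y - b n) := by
  have hmem := Nat.mem_divisors_self n hn
  simp only [ghostComponent, ← Finset.sum_erase_add _ _ hmem, Function.update_self,
    Nat.div_self (Nat.pos_of_ne_zero hn), pow_one]
  rw [Finset.sum_congr rfl fun d hd => by rw [Function.update_of_ne (Finset.ne_of_mem_erase hd)]]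
  ring

end Ghost

theorem Nat.pow_factorization_dvd_of_dvd_mul_of_not_dvd {p n d : ℕ} (hp : p.Prime) (hn : n ≠ 0)
    (hd : d ∣ p * n) (hdn : ¬d ∣ n) : p ^ (p * n).factorization p ∣ d := by
  obtain ⟨k, hk⟩ := hd
  have hpk : ¬p ∣ k := by
    rintro ⟨j, rfl⟩
    exact hdn ⟨j, mul_left_cancel₀ hp.ne_zero (by rw [hk]; ring)⟩
  have hd0 : d ≠ 0 := by rintro rfl; simp [hp.ne_zero, hn] at hk
  have hk0 : k ≠ 0 := by rintro rfl; simp [hp.ne_zero, hn] at hk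
  rw [hk, Nat.factorization_mul hd0 hk0, Finsupp.add_apply,
    Nat.factorization_eq_zero_of_not_dvd hpk, add_zero]
  exact Nat.ordProj_dvd d p

section Divisibility

variable {R : Type*} [CommRing R]

theorem pow_factorization_succ_dvd_pow_sub_pow {p : ℕ} {a b : R} (h : (p : R) ∣ a - b) (k : ℕ) :
    (p : R) ^ (k.factorization p + 1) ∣ a ^ k - b ^ k := by
  have hk : k = p ^ k.factorization p * (k / p ^ k.factorization p) :=
    (Nat.ordProj_mul_ordCompl_eq_self k p).symm
  rw [hk, pow_mul, pow_mul, ← hk]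
  exact (dvd_sub_pow_of_dvd_sub h _).trans (sub_dvd_pow_sub_pow _ _ _)

theorem natCast_dvd_of_forall_prime_pow_dvd {n : ℕ} (hn : n ≠ 0) {r : R}
    (h : ∀ p : ℕ, p.Prime → p ∣ n → (p : R) ^ n.factorization p ∣ r) : (n : R) ∣ r := by
  rw [← Nat.prod_factorization_pow_eq_self hn, Finsupp.prod, Nat.support_factorization,
    Nat.cast_prod]
  refine Finset.prod_dvd_of_coprime (fun p hp q hq hpq => ?_) fun p hp => ?_
  · have hpq' := (Nat.coprime_primes (Nat.prime_of_mem_primeFactors hp)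
      (Nat.prime_of_mem_primeFactors hq)).mpr hpq
    simpa using (hpq'.pow (n.factorization p) (n.factorization q)).cast (R := R)
  · simpa using h p (Nat.prime_of_mem_primeFactors hp) (Nat.dvd_of_mem_primeFactors hp)

theorem pow_factorization_dvd_ghostComponent_sub {p n : ℕ} (hp : p.Prime) (hn : n ≠ 0)
    {b c : ℕ → R} (hc : ∀ d, (p : R) ∣ c d - b d ^ p) :
    (p : R) ^ (p * n).factorization p ∣ ghostComponent (p * n) b - ghostComponent n c := by
  have hsub : n.divisors ⊆ (p * n).divisors :=
    Nat.divisors_subset_of_dvd (mul_ne_zero hp.ne_zero hn) (dvd_mul_left n p)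
  rw [ghostComponent, ghostComponent, ← Finset.sum_sdiff hsub, add_sub_assoc,
    ← Finset.sum_sub_distrib]
  refine dvd_add (Finset.dvd_sum fun d hd => ?_) (Finset.dvd_sum fun d hd => ?_)
  · obtain ⟨hd, hdn⟩ := Finset.mem_sdiff.mp hd
    have := Nat.pow_factorization_dvd_of_dvd_mul_of_not_dvd hp hn (Nat.dvd_of_mem_divisors hd)
      fun h => hdn (Nat.mem_divisors.mpr ⟨h, hn⟩)
    exact (by exact_mod_cast Nat.cast_dvd_cast (α := R) this : (p : R) ^ _ ∣ d).mul_right _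
  · obtain ⟨k, rfl⟩ := Nat.dvd_of_mem_divisors hd
    have hd0 : d ≠ 0 := left_ne_zero_of_mul hn
    have hk0 : k ≠ 0 := right_ne_zero_of_mul hn
    have hval : (p * (d * k)).factorization p = d.factorization p + (k.factorization p + 1) := by
      rw [Nat.factorization_mul hp.ne_zero (mul_ne_zero hd0 hk0), Nat.factorization_mul hd0 hk0]
      simp only [Finsupp.coe_add, Pi.add_apply, hp.factorization_self]
      ring
    rw [hval, pow_add, mul_left_comm, Nat.mul_div_cancel_left _ (Nat.pos_of_ne_zero hd0),
      Nat.mul_div_cancel_left _ (Nat.pos_of_ne_zero hd0), pow_mul, ← mul_sub]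
    refine mul_dvd_mul (by exact_mod_cast Nat.cast_dvd_cast (Nat.ordProj_dvd d p)) ?_
    exact dvd_sub_comm.mp (pow_factorization_succ_dvd_pow_sub_pow (hc d) k)

end Divisibility

section Frobenius

variable {R : Type*} [CommRing R]

@[simp]
theorem padicProj_mk {p : R} {a b : ℕ} (h : b ≤ a) (x : R) :
    padicProj p h (Ideal.Quotient.mk _ x) = Ideal.Quotient.mk _ x :=
  Ideal.Quotient.factor_mk _ x

theorem exists_mk_eq_and_dvd_sub_pow {p k : ℕ} (hk : 1 ≤ k)
    {ψ : R →+* R ⧸ Ideal.span {(p : R) ^ k}}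
    (hψ : ∀ x, padicProj (p : R) hk (ψ x) = Ideal.Quotient.mk (Ideal.span {(p : R) ^ 1}) (x ^ p))
    (a : R) : ∃ c, Ideal.Quotient.mk _ c = ψ a ∧ (p : R) ∣ c - a ^ p := by
  obtain ⟨c, hc⟩ := Ideal.Quotient.mk_surjective (ψ a)
  refine ⟨c, hc, ?_⟩
  have := hψ a
  rwa [← hc, padicProj_mk, Ideal.Quotient.eq, Ideal.mem_span_singleton, pow_one] at this

theorem mk_ghostComponent_mul_eq_padicProj {p n k : ℕ} (hp : p.Prime) (hn : n ≠ 0) (hk : 1 ≤ k)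
    {ψ : R →+* R ⧸ Ideal.span {(p : R) ^ k}}
    (hψ : ∀ x, padicProj (p : R) hk (ψ x) = Ideal.Quotient.mk (Ideal.span {(p : R) ^ 1}) (x ^ p))
    (hle : (p * n).factorization p ≤ k) (b : ℕ → R) :
    Ideal.Quotient.mk (Ideal.span {(p : R) ^ (p * n).factorization p}) (ghostComponent (p * n) b) =
      padicProj (p : R) hle (ψ (ghostComponent n b)) := by
  choose c hc using fun d => exists_mk_eq_and_dvd_sub_pow hk hψ (b d)
  have hψb : ψ ∘ b = Ideal.Quotient.mk _ ∘ c := funext fun d => (hc d).1.symm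
  rw [map_ghostComponent ψ, hψb, ← map_ghostComponent, padicProj_mk, Ideal.Quotient.eq,
    Ideal.mem_span_singleton]
  exact pow_factorization_dvd_ghostComponent_sub hp hn fun d => (hc d).2

end Frobenius

theorem exists_forall_ghostComponent_eq {R : Type*} [CommRing R] {m : ℕ} (x : ℕ → R)
    (h : ∀ (b : ℕ → R) (e : ℕ), e ∈ m.divisors →
      (∀ f ∈ m.divisors, f < e → x f = ghostComponent f b) → (e : R) ∣ x e - ghostComponent e b) :
    ∃ b : ℕ → R, ∀ e ∈ m.divisors, x e = ghostComponent e b := by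
  suffices ∀ N, ∃ b : ℕ → R, ∀ e ∈ m.divisors, e < N → x e = ghostComponent e b by
    obtain ⟨b, hb⟩ := this (m + 1)
    exact ⟨b, fun e he => hb e he (Nat.lt_succ_of_le (Nat.divisor_le he))⟩
  intro N
  induction N with
  | zero => exact ⟨0, by simp⟩
  | succ N ih =>
    obtain ⟨b, hb⟩ := ih
    by_cases hN : N ∈ m.divisors
    · obtain ⟨y, hy⟩ := h b N hN hb
      refine ⟨Function.update b N (b N + y), fun e he heN => ?_⟩
      rcases Nat.lt_succ_iff_lt_or_eq.mp heN with heN | rfl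
      · rw [ghostComponent_update_of_lt heN, hb e he heN]
      · rw [ghostComponent_update_self (Nat.pos_of_mem_divisors hN).ne']
        linear_combination hy
    · refine ⟨b, fun e he heN => hb e he ?_⟩
      exact (Nat.lt_succ_iff.mp heN).lt_of_ne (by rintro rfl; exact hN he)

/-- **Dwork's lemma** (variant with truncated Frobenius lifts): given, for every prime
`p ∣ m`, a ring homomorphism `φ_p : R → R/p^{v_p(m)}R` with `φ_p(x) ≡ x^p (mod pR)`,
a family `(x_e)_{e ∣ m}` is in the image of the ghost map of the `m`-truncated big Witt
vectors if and only if `x_e ≡ φ_p(x_{e/p})` in `R/p^{v_p(e)}R` whenever `p ∣ e ∣ m`. -/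
theorem dwork_lemma {R : Type*} [CommRing R] (m : ℕ) (hm : 1 ≤ m)
    (φ : ∀ p : ℕ, p.Prime → p ∣ m → R →+* R ⧸ Ideal.span {(p : R) ^ m.factorization p})
    (hφ : ∀ (p : ℕ) (hp : p.Prime) (hpm : p ∣ m) (x : R),
      padicProj (p : R) (by exact hp.factorization_pos_of_dvd (by omega) hpm)
          (φ p hp hpm x) =
        Ideal.Quotient.mk (Ideal.span {(p : R) ^ 1}) (x ^ p))
    (x : ℕ → R) :
    (∃ b : ℕ → R, ∀ e ∈ m.divisors, x e = ∑ d ∈ e.divisors, (d : R) * b d ^ (e / d)) ↔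
      ∀ (p : ℕ) (hp : p.Prime) (e : ℕ) (hem : e ∣ m) (hpe : p ∣ e),
        Ideal.Quotient.mk (Ideal.span {(p : R) ^ e.factorization p}) (x e) =
          padicProj (p : R) (factorization_le_of_dvd_aux (by omega) hem p)
            (φ p hp (hpe.trans hem) (x (e / p))) := by
  have hm0 : m ≠ 0 := by omega
  have hmem : ∀ {n : ℕ}, n ∣ m → n ∈ m.divisors := fun h => Nat.mem_divisors.mpr ⟨h, hm0⟩
  have hcongr : ∀ (b : ℕ → R) (p : ℕ) (hp : p.Prime) (n : ℕ) (hpn : p * n ∣ m),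
      Ideal.Quotient.mk (Ideal.span {(p : R) ^ (p * n).factorization p}) (ghostComponent (p * n) b)
        = padicProj (p : R) (factorization_le_of_dvd_aux hm0 hpn p)
            (φ p hp ((dvd_mul_right p n).trans hpn) (ghostComponent n b)) :=
    fun b p hp n hpn => mk_ghostComponent_mul_eq_padicProj hp
      (right_ne_zero_of_mul (ne_zero_of_dvd_ne_zero hm0 hpn)) _ (hφ p hp _) _ b
  constructor
  · rintro ⟨b, hb⟩ p hp e hem ⟨n, rfl⟩
    rw [Nat.mul_div_cancel_left n hp.pos, hb _ (hmem hem),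
      hb _ (hmem ((dvd_mul_left n p).trans hem))]
    exact hcongr b p hp n hem
  · intro H
    refine exists_forall_ghostComponent_eq x fun b e he hb =>
      natCast_dvd_of_forall_prime_pow_dvd (Nat.pos_of_mem_divisors he).ne' ?_
    rintro p hp ⟨n, rfl⟩
    have hem := Nat.dvd_of_mem_divisors he
    have hn : n < p * n :=
      (Nat.lt_mul_iff_one_lt_left (Nat.pos_of_mul_pos_left (Nat.pos_of_mem_divisors he))).mpr
        hp.one_lt
    have h := H p hp (p * n) hem (dvd_mul_right p n)
    rwa [Nat.mul_div_cancel_left n hp.pos, hb n (hmem ((dvd_mul_left n p).trans hem)) hn,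
      ← hcongr b p hp n hem, Ideal.Quotient.eq, Ideal.mem_span_singleton] at h
end

section
/- Preservation of the Dwork–Frobenius congruences under the cyclotomic norm: Let R be a commutative ring and m, m' positive integers with m | m'. Assume that for every prime p dividing m' there is a ring homomorphism φ_p : R → R/p^{v_p(m')}R with φ_p(x) ≡ x^p modulo pR, extended coefficientwise to polynomial rings. Let (c̃_e(q))_{e|m} be a family of polynomials in R[q] such that for every prime p and every integer e ≥ 1 with pe | m, c̃_e(q) ≡ φ_p(c̃_{pe}(q)) in (R/p^{v_p(m/e)}R)[q]. For every divisor e of m' set c̃'_e(q) := c̃_{gcd(e,m)}(q^{e/gcd(e,m)})^{m'/lcm(e,m)}. Then for every prime p and every integer e ≥ 1 with pe | m', one has c̃'_e(q) ≡ φ_p(c̃'_{pe}(q)) in (R/p^{v_p(m'/e)}R)[q]. -/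
open Polynomial

/-!
Put `g = gcd(e, m)` and `L = lcm(e, m)`, so that `c̃'_e = c̃_g(q^{e/g})^{m'/L}` and
`m'/e = (m/g)·(m'/L)`; everything is compared in `R/p^{v_p(m')}R`. If `p·g ∣ m`, then
`gcd(pe, m) = p·g` and `lcm(pe, m) = L`: the congruence `c̃_g ≡ φ_p(c̃_{pg})` modulo `p^{v_p(m/g)}`
gains one power of `p` each time it is raised to the `p`-th power, hence holds modulo
`p^{v_p(m/g) + v_p(m'/L)}` after raising to the power `m'/L`. Otherwise `gcd(pe, m) = g`,
`lcm(pe, m) = p·L` and `v_p(m/g) = 0`; now `c̃_g(q)^p ≡ φ_p(c̃_g)(q^p)` modulo `p` because `φ_p`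
lifts the Frobenius, and raising this to the power `m'/(pL)` gives the congruence modulo
`p^{v_p(m'/L)}`.
-/

section PowSubPow

variable {S : Type*} [CommRing S] {p s : ℕ} {a b : S}

theorem pow_succ_dvd_pow_sub_pow_of_pow_dvd_sub (hs : 1 ≤ s) (h : (p : S) ^ s ∣ a - b) :
    (p : S) ^ (s + 1) ∣ a ^ p - b ^ p := by
  rw [pow_succ', ← geom_sum₂_mul]
  exact mul_dvd_mul (dvd_geom_sum₂_self ((dvd_pow_self _ (by omega)).trans h)) h

theorem pow_add_factorization_dvd_pow_sub_pow (hs : 1 ≤ s) (h : (p : S) ^ s ∣ a - b) (N : ℕ) :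
    (p : S) ^ (s + N.factorization p) ∣ a ^ N - b ^ N := by
  have hpow : ∀ k, (p : S) ^ (s + k) ∣ a ^ p ^ k - b ^ p ^ k := by
    intro k
    induction k with
    | zero => simpa using h
    | succ k ih =>
      rw [← add_assoc, pow_succ p k, pow_mul, pow_mul]
      exact pow_succ_dvd_pow_sub_pow_of_pow_dvd_sub (by omega) ih
  have := (hpow (N.factorization p)).trans (sub_dvd_pow_sub_pow _ _ (ordCompl[p] N))
  rwa [← pow_mul, ← pow_mul, Nat.ordProj_mul_ordCompl_eq_self] at this

end PowSubPow

theorem natCast_dvd_pow_sub_expand {S : Type*} [CommRing S] {p : ℕ} (hp : p.Prime) {F G : S[X]}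
    (h : ∀ i, (p : S) ∣ G.coeff i - F.coeff i ^ p) : (p : S[X]) ∣ F ^ p - expand S p G := by
  by_cases hu : IsUnit (p : S)
  · exact (by simpa using hu.map C : IsUnit (p : S[X])).dvd
  -- `S ⧸ (p)` has characteristic `p`, where `F ^ p` is `expand p` of the Frobenius twist of `F`.
  have := Fact.mk hp
  have := CharP.quotient S p hu
  set π := Ideal.Quotient.mk (Ideal.span {(p : S)})
  have hπ : ∀ x : S, π x = 0 ↔ (p : S) ∣ x := fun x => by
    rw [Ideal.Quotient.eq_zero_iff_mem, Ideal.mem_span_singleton]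
  have hG : G.map π = (F.map π).map (frobenius _ p) := ext fun i => by
    rw [coeff_map, coeff_map, coeff_map, frobenius_def, ← map_pow, ← sub_eq_zero, ← map_sub, hπ]
    exact h i
  rw [← C_eq_natCast, C_dvd_iff_dvd_coeff]
  intro i
  rw [← hπ, ← coeff_map, Polynomial.map_sub, Polynomial.map_pow, map_expand, hG, ← map_expand,
    map_frobenius_expand, sub_self, coeff_zero]

theorem natCast_pow_factorization_dvd_expand_pow_sub_expand_pow {S : Type*} [CommRing S] {p : ℕ}
    (hp : p.Prime) {F G : S[X]} (h : ∀ i, (p : S) ∣ G.coeff i - F.coeff i ^ p) (n : ℕ) {N : ℕ}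
    (hN : p ∣ N) :
    (p : S[X]) ^ N.factorization p ∣ expand S n F ^ N - expand S (p * n) G ^ (N / p) := by
  obtain ⟨N, rfl⟩ := hN
  rcases eq_or_ne N 0 with rfl | hN0
  · simp
  have hp1 : (p : S[X]) ^ 1 ∣ expand S n F ^ p - expand S (p * n) G := by
    simpa [mul_comm p n, ← expand_expand] using
      map_dvd (expand S n) (natCast_dvd_pow_sub_expand hp h)
  rw [Nat.factorization_mul hp.ne_zero hN0, Finsupp.add_apply, hp.factorization_self,
    Nat.mul_div_cancel_left _ hp.pos, pow_mul]
  exact pow_add_factorization_dvd_pow_sub_pow le_rfl hp1 N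

section PadicProj

variable {R : Type*} [CommRing R] (r : R) {a b : ℕ} (h : b ≤ a)

theorem padicProj_eq_zero_iff (x : R ⧸ Ideal.span {r ^ a}) :
    padicProj r h x = 0 ↔ Ideal.Quotient.mk _ r ^ b ∣ x := by
  rw [← RingHom.mem_ker, padicProj, Ideal.Quotient.factor_ker, Ideal.map_span, Set.image_singleton,
    Ideal.mem_span_singleton, map_pow]

theorem mk_eq_padicProj_iff (x : R) (y : R ⧸ Ideal.span {r ^ a}) :
    Ideal.Quotient.mk (Ideal.span {r ^ b}) x = padicProj r h y ↔
      Ideal.Quotient.mk _ r ^ b ∣ Ideal.Quotient.mk _ x - y := by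
  rw [← padicProj_eq_zero_iff r h, map_sub, sub_eq_zero, padicProj, Ideal.Quotient.factor_mk]

theorem map_mk_eq_map_padicProj_iff (F : R[X]) (G : (R ⧸ Ideal.span {r ^ a})[X]) :
    F.map (Ideal.Quotient.mk (Ideal.span {r ^ b})) = G.map (padicProj r h) ↔
      C (Ideal.Quotient.mk _ r ^ b) ∣ F.map (Ideal.Quotient.mk _) - G := by
  simp only [Polynomial.ext_iff, C_dvd_iff_dvd_coeff, coeff_map, coeff_sub, mk_eq_padicProj_iff]

end PadicProj

namespace Nat

theorem gcd_mul_left_left_dvd_mul_gcd (p e m : ℕ) : gcd (p * e) m ∣ p * gcd e m :=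
  gcd_mul_left p e m ▸ dvd_gcd (gcd_dvd_left _ _) ((gcd_dvd_right _ _).trans (dvd_mul_left m p))

theorem gcd_mul_left_eq_of_mul_gcd_dvd {p e m : ℕ} (h : p * gcd e m ∣ m) :
    gcd (p * e) m = p * gcd e m :=
  dvd_antisymm (gcd_mul_left_left_dvd_mul_gcd p e m)
    (dvd_gcd (mul_dvd_mul_left p (gcd_dvd_left e m)) h)

theorem gcd_mul_left_eq_of_not_mul_gcd_dvd {p e m : ℕ} (hp : p.Prime) (h : ¬p * gcd e m ∣ m) :
    gcd (p * e) m = gcd e m := by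
  obtain ⟨d, hd⟩ := gcd_dvd_gcd_mul_left_left e m p
  rcases eq_or_ne (gcd e m) 0 with h0 | h0
  · rw [hd, h0, zero_mul]
  have hdp : d ∣ p := by
    rw [← Nat.mul_dvd_mul_iff_left (pos_of_ne_zero h0), ← hd, mul_comm (gcd e m) p]
    exact gcd_mul_left_left_dvd_mul_gcd p e m
  rcases hp.eq_one_or_self_of_dvd d hdp with hd1 | hdp
  · rw [hd, hd1, mul_one]
  · refine absurd ?_ h
    rw [mul_comm, ← hdp, ← hd]
    exact gcd_dvd_right _ _

theorem lcm_mul_left_eq_of_mul_gcd_dvd {p e m : ℕ} (hp : 0 < p) (h : p * gcd e m ∣ m) :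
    lcm (p * e) m = lcm e m := by
  rw [lcm, lcm, gcd_mul_left_eq_of_mul_gcd_dvd h, mul_assoc, Nat.mul_div_mul_left _ _ hp]

theorem lcm_mul_left_eq_of_not_mul_gcd_dvd {p e m : ℕ} (hp : p.Prime) (h : ¬p * gcd e m ∣ m) :
    lcm (p * e) m = p * lcm e m := by
  rw [lcm, lcm, gcd_mul_left_eq_of_not_mul_gcd_dvd hp h, mul_assoc,
    Nat.mul_div_assoc _ (dvd_mul_of_dvd_left (gcd_dvd_left e m) m)]

theorem div_eq_div_gcd_mul_div_lcm {n e m : ℕ} (h : lcm e m ∣ n) :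
    n / e = m / gcd e m * (n / lcm e m) := by
  have hL : lcm e m = e * (m / gcd e m) := Nat.mul_div_assoc e (gcd_dvd_right e m)
  rw [hL] at h ⊢
  rw [← Nat.div_div_eq_div_mul, Nat.mul_div_cancel' (Nat.dvd_div_of_mul_dvd h)]

theorem factorization_div_eq_add_of_lcm_dvd {n e m : ℕ} (h : lcm e m ∣ n) (hne : n / e ≠ 0)
    (p : ℕ) :
    (n / e).factorization p = (m / gcd e m).factorization p + (n / lcm e m).factorization p := by
  rw [div_eq_div_gcd_mul_div_lcm h] at hne ⊢
  obtain ⟨hm, hn⟩ := mul_ne_zero_iff.mp hne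
  rw [factorization_mul hm hn, Finsupp.add_apply]

end Nat

noncomputable def cyclotomicNorm {A : Type*} [CommSemiring A] (m n : ℕ) (c : ℕ → A[X]) (e : ℕ) :
    A[X] :=
  expand A (e / Nat.gcd e m) (c (Nat.gcd e m)) ^ (n / Nat.lcm e m)

theorem map_cyclotomicNorm {A B : Type*} [CommSemiring A] [CommSemiring B] (f : A →+* B)
    (m n : ℕ) (c : ℕ → A[X]) (e : ℕ) :
    (cyclotomicNorm m n c e).map f = cyclotomicNorm m n (fun d => (c d).map f) e := by
  rw [cyclotomicNorm, cyclotomicNorm, Polynomial.map_pow, map_expand]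

section CyclotomicNorm

variable {A : Type*} [CommRing A] {p n e m : ℕ} {F G : ℕ → A[X]}

theorem natCast_pow_dvd_cyclotomicNorm_sub_of_mul_gcd_dvd (hp : p.Prime)
    (hpm : p * Nat.gcd e m ∣ m) (hn : Nat.lcm e m ∣ n)
    (h : (p : A[X]) ^ (m / Nat.gcd e m).factorization p ∣ F (Nat.gcd e m) - G (p * Nat.gcd e m)) :
    (p : A[X]) ^ (n / e).factorization p ∣
      cyclotomicNorm m n F e - cyclotomicNorm m n G (p * e) := by
  rcases eq_or_ne (n / e) 0 with h0 | h0
  · simp [h0]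
  have hmg : m / Nat.gcd e m ≠ 0 := left_ne_zero_of_mul (Nat.div_eq_div_gcd_mul_div_lcm hn ▸ h0)
  rw [cyclotomicNorm, cyclotomicNorm, Nat.gcd_mul_left_eq_of_mul_gcd_dvd hpm,
    Nat.lcm_mul_left_eq_of_mul_gcd_dvd hp.pos hpm, Nat.mul_div_mul_left _ _ hp.pos,
    Nat.factorization_div_eq_add_of_lcm_dvd hn h0]
  exact pow_add_factorization_dvd_pow_sub_pow
    (hp.factorization_pos_of_dvd hmg (Nat.dvd_div_of_mul_dvd (mul_comm p _ ▸ hpm)))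
    (by simpa using map_dvd (expand A (e / Nat.gcd e m)) h) _

theorem natCast_pow_dvd_cyclotomicNorm_sub_of_not_mul_gcd_dvd (hp : p.Prime)
    (hpm : ¬p * Nat.gcd e m ∣ m) (hn : Nat.lcm (p * e) m ∣ n)
    (h : ∀ i, (p : A) ∣ (G (Nat.gcd e m)).coeff i - (F (Nat.gcd e m)).coeff i ^ p) :
    (p : A[X]) ^ (n / e).factorization p ∣
      cyclotomicNorm m n F e - cyclotomicNorm m n G (p * e) := by
  rw [Nat.lcm_mul_left_eq_of_not_mul_gcd_dvd hp hpm, mul_comm] at hn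
  have hv : (m / Nat.gcd e m).factorization p = 0 := by
    refine Nat.factorization_eq_zero_of_not_dvd fun hdvd => hpm ?_
    rw [mul_comm]
    exact (Nat.dvd_div_iff_mul_dvd (Nat.gcd_dvd_right e m)).mp hdvd
  rcases eq_or_ne (n / e) 0 with h0 | h0
  · simp [h0]
  rw [cyclotomicNorm, cyclotomicNorm, Nat.gcd_mul_left_eq_of_not_mul_gcd_dvd hp hpm,
    Nat.lcm_mul_left_eq_of_not_mul_gcd_dvd hp hpm, Nat.mul_div_assoc _ (Nat.gcd_dvd_left e m),
    mul_comm p (Nat.lcm e m), ← Nat.div_div_eq_div_mul,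
    Nat.factorization_div_eq_add_of_lcm_dvd (dvd_of_mul_right_dvd hn) h0, hv, zero_add]
  exact natCast_pow_factorization_dvd_expand_pow_sub_expand_pow hp h _ (Nat.dvd_div_of_mul_dvd hn)

end CyclotomicNorm

/-- Preservation of the Dwork–Frobenius congruences under the cyclotomic norm:
if the family `(c̃_e(q))_{e ∣ m}` satisfies `c̃_e(q) ≡ φ_p(c̃_{pe}(q))` in
`(R/p^{v_p(m/e)}R)[q]` whenever `pe ∣ m`, then the family
`c̃'_e(q) := c̃_{gcd(e,m)}(q^{e/gcd(e,m)})^{m'/lcm(e,m)}`, for `e ∣ m'`, satisfies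
`c̃'_e(q) ≡ φ_p(c̃'_{pe}(q))` in `(R/p^{v_p(m'/e)}R)[q]` whenever `pe ∣ m'`. -/
theorem cyclotomicNorm_preserves_dwork_congruences {R : Type*} [CommRing R]
    (m m' : ℕ) (hm' : 0 < m') (hmm' : m ∣ m')
    (φ : ∀ p : ℕ, p.Prime → p ∣ m' → R →+* R ⧸ Ideal.span {(p : R) ^ m'.factorization p})
    (hφ : ∀ (p : ℕ) (hp : p.Prime) (hpm : p ∣ m') (x : R),
      padicProj (p : R) (by exact hp.factorization_pos_of_dvd hm'.ne' hpm)
          (φ p hp hpm x) =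
        Ideal.Quotient.mk (Ideal.span {(p : R) ^ 1}) (x ^ p))
    (c : ℕ → Polynomial R)
    (hc : ∀ (p : ℕ) (hp : p.Prime) (e : ℕ) (he : 1 ≤ e) (hpe : p * e ∣ m),
      (c e).map (Ideal.Quotient.mk (Ideal.span {(p : R) ^ (m / e).factorization p})) =
        (c (p * e)).map
          ((padicProj (p : R)
              (factorization_le_of_dvd_aux hm'.ne'
                ((Nat.div_dvd_of_dvd ((dvd_mul_left e p).trans hpe)).trans hmm') p)).comp
            (φ p hp (((dvd_mul_right p e).trans hpe).trans hmm'))))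
    (c' : ℕ → Polynomial R)
    (hc' : ∀ e : ℕ,
      c' e = (Polynomial.expand R (e / Nat.gcd e m) (c (Nat.gcd e m))) ^ (m' / Nat.lcm e m)) :
    ∀ (p : ℕ) (hp : p.Prime) (e : ℕ) (he : 1 ≤ e) (hpe : p * e ∣ m'),
      (c' e).map (Ideal.Quotient.mk (Ideal.span {(p : R) ^ (m' / e).factorization p})) =
        (c' (p * e)).map
          ((padicProj (p : R)
              (factorization_le_of_dvd_aux hm'.ne'
                (Nat.div_dvd_of_dvd ((dvd_mul_left e p).trans hpe)) p)).comp
            (φ p hp ((dvd_mul_right p e).trans hpe))) := by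
  intro p hp e he hpe
  obtain rfl : c' = cyclotomicNorm m m' c := funext hc'
  rw [← Polynomial.map_map, map_mk_eq_map_padicProj_iff, map_cyclotomicNorm, map_cyclotomicNorm]
  simp only [map_pow, map_natCast]
  by_cases hpm : p * e.gcd m ∣ m
  · refine natCast_pow_dvd_cyclotomicNorm_sub_of_mul_gcd_dvd hp hpm
      (Nat.lcm_dvd ((dvd_mul_left e p).trans hpe) hmm') ?_
    have hs := hc p hp _ (Nat.gcd_pos_of_pos_left m he) hpm
    rw [← Polynomial.map_map, map_mk_eq_map_padicProj_iff] at hs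
    simpa only [map_pow, map_natCast] using hs
  · refine natCast_pow_dvd_cyclotomicNorm_sub_of_not_mul_gcd_dvd hp hpm (Nat.lcm_dvd hpe hmm')
      fun i => ?_
    have := (mk_eq_padicProj_iff _ _ _ _).mp
      (hφ p hp ((dvd_mul_right p e).trans hpe) ((c (e.gcd m)).coeff i)).symm
    rwa [pow_one, map_natCast, map_pow, dvd_sub_comm, ← coeff_map, ← coeff_map] at this
end

section
/- Preservation of the Dwork–Frobenius congruences under the cyclotomic Frobenius: Let R be a commutative ring and d, m positive integers. Assume that for every prime p dividing m there is a ring homomorphism φ_p : R → R/p^{v_p(m)}R with φ_p(x) ≡ x^p modulo pR, extended coefficientwise to polynomial rings. Let (c̃_e(q))_{e|m} be a family of polynomials in R[q] such that for every prime p and every integer e ≥ 1 with pe | m, c̃_e(q) ≡ φ_p(c̃_{pe}(q)) in (R/p^{v_p(m/e)}R)[q]. For every divisor e of dm with d | e set c̃'_e(q) := c̃_{e/d}(q^d). Then for every prime p dividing m and every integer e ≥ 1 with d | e and pe | dm, one has c̃'_e(q) ≡ φ_p(c̃'_{pe}(q)) in (R/p^{v_p(dm/e)}R)[q]. -/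
/- The congruences for `c̃'` are those for `c̃` transported along `q ↦ q^d`, which commutes with
reduction and with `φ_p` since both act coefficientwise. Writing `e = dk`, one has
`c̃'_e = c̃_k(q^d)`, `c̃'_{pe} = c̃_{pk}(q^d)` and `dm/e = m/k`, so the required congruence is the
image under `expand d` of the hypothesis for `k`. -/

open Polynomial

/-- With `d ∣ e` and `pe ∣ dm`, one has `dm/e ∣ m`. -/
theorem dvd_aux {d m p e : ℕ} (hd : 0 < d) (hde : d ∣ e) (hpe : p * e ∣ d * m) :
    d * m / e ∣ m := by
  obtain ⟨k, rfl⟩ := hde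
  rw [Nat.mul_div_mul_left m k hd]
  exact Nat.div_dvd_of_dvd ((Nat.mul_dvd_mul_iff_left hd).mp ((dvd_mul_left (d * k) p).trans hpe))

section padicProj

variable {R : Type*} [CommRing R] (p : R)

theorem padicProj_comp_mk {a b : ℕ} (h : b ≤ a) :
    (padicProj p h).comp (Ideal.Quotient.mk (Ideal.span {p ^ a})) =
      Ideal.Quotient.mk (Ideal.span {p ^ b}) :=
  Ideal.Quotient.factor_comp_mk _

theorem padicProj_comp_padicProj {a b c : ℕ} (hab : b ≤ a) (hbc : c ≤ b) :
    (padicProj p hbc).comp (padicProj p hab) = padicProj p (hbc.trans hab) :=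
  Ideal.Quotient.factor_comp _ _

theorem map_mk_eq_map_padicProj_comp_of_le {S : Type*} [Semiring S] {n a b : ℕ} (han : a ≤ n)
    (hba : b ≤ a)
    (ψ : S →+* R ⧸ Ideal.span {p ^ n}) {f : R[X]} {g : S[X]}
    (hfg : f.map (Ideal.Quotient.mk (Ideal.span {p ^ a})) = g.map ((padicProj p han).comp ψ)) :
    f.map (Ideal.Quotient.mk (Ideal.span {p ^ b})) =
      g.map ((padicProj p (hba.trans han)).comp ψ) := by
  have := congrArg (map (padicProj p hba)) hfg
  rwa [map_map, map_map, padicProj_comp_mk, ← RingHom.comp_assoc,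
    padicProj_comp_padicProj] at this

end padicProj

/-- Preservation of the Dwork–Frobenius congruences under the cyclotomic Frobenius:
if the family `(c̃_e(q))_{e ∣ m}` satisfies `c̃_e(q) ≡ φ_p(c̃_{pe}(q))` in
`(R/p^{v_p(m/e)}R)[q]` whenever `pe ∣ m`, then the family `c̃'_e(q) := c̃_{e/d}(q^d)`,
for `d ∣ e ∣ dm`, satisfies `c̃'_e(q) ≡ φ_p(c̃'_{pe}(q))` in `(R/p^{v_p(dm/e)}R)[q]`
whenever `p ∣ m`, `d ∣ e` and `pe ∣ dm`. -/
theorem cyclotomicFrobenius_preserves_dwork_congruences {R : Type*} [CommRing R]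
    (d m : ℕ) (hd : 0 < d) (hm : 0 < m)
    (φ : ∀ p : ℕ, p.Prime → p ∣ m → R →+* R ⧸ Ideal.span {(p : R) ^ m.factorization p})
    (c : ℕ → Polynomial R)
    (hc : ∀ (p : ℕ) (hp : p.Prime) (e : ℕ) (he : 1 ≤ e) (hpe : p * e ∣ m),
      (c e).map (Ideal.Quotient.mk (Ideal.span {(p : R) ^ (m / e).factorization p})) =
        (c (p * e)).map
          ((padicProj (p : R)
              (factorization_le_of_dvd_aux hm.ne'
                (Nat.div_dvd_of_dvd ((dvd_mul_left e p).trans hpe)) p)).comp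
            (φ p hp ((dvd_mul_right p e).trans hpe))))
    (c' : ℕ → Polynomial R)
    (hc' : ∀ e : ℕ, c' e = Polynomial.expand R d (c (e / d))) :
    ∀ (p : ℕ) (hp : p.Prime) (hpm : p ∣ m) (e : ℕ) (he : 1 ≤ e) (hde : d ∣ e)
      (hpe : p * e ∣ d * m),
      (c' e).map
          (Ideal.Quotient.mk (Ideal.span {(p : R) ^ (d * m / e).factorization p})) =
        (c' (p * e)).map
          ((padicProj (p : R)
              (factorization_le_of_dvd_aux hm.ne' (dvd_aux hd hde hpe) p)).comp
            (φ p hp hpm)) := by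
  intro p hp hpm e he hde hpe
  obtain ⟨k, rfl⟩ := hde
  have hk : 1 ≤ k := Nat.one_le_iff_ne_zero.mpr (by rintro rfl; simp at he)
  have hpk : p * k ∣ m :=
    (Nat.mul_dvd_mul_iff_left hd).mp (by rwa [mul_left_comm])
  have hval : (d * m / (d * k)).factorization p ≤ (m / k).factorization p := by
    rw [Nat.mul_div_mul_left m k hd]
  rw [hc', hc', Nat.mul_div_cancel_left k hd, show p * (d * k) / d = p * k by
    rw [mul_left_comm, Nat.mul_div_cancel_left _ hd], map_expand, map_expand]
  exact congrArg (expand _ d) (map_mk_eq_map_padicProj_comp_of_le _ _ hval _ (hc p hp k hk hpk))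
end

section
/- For every prime number p and every integer r ≥ 0, the element q^{p^r} − 1 of the polynomial ring ℤ[q] belongs to the ideal (p, q − 1)^r, the r-th power of the ideal generated by p and q − 1. -/
open Polynomial

/-- For every prime `p` and `r ≥ 0`, the element `q^{p^r} − 1` of `ℤ[q]` belongs to the
ideal `(p, q − 1)^r`. -/
theorem pow_prime_pow_sub_one_mem (p : ℕ) (hp : p.Prime) (r : ℕ) :
    (X ^ p ^ r - 1 : Polynomial ℤ) ∈
      (Ideal.span {(p : Polynomial ℤ), X - 1}) ^ r := by
  set I : Ideal (Polynomial ℤ) := Ideal.span {(p : Polynomial ℤ), X - 1} with hI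
  have hX1 : (X - 1 : Polynomial ℤ) ∈ I := Ideal.subset_span (by simp)
  have hp' : ((p : ℕ) : Polynomial ℤ) ∈ I := Ideal.subset_span (by simp)
  induction r with
  | zero => simp
  | succ r ih =>
    have key : (X ^ p ^ (r + 1) - 1 : Polynomial ℤ)
        = (X ^ p ^ r - 1) * ∑ i ∈ Finset.range p, (X ^ p ^ r) ^ i := by
      rw [pow_succ, pow_mul, mul_comm, geom_sum_mul]
    rw [key, pow_succ]
    refine Ideal.mul_mem_mul ih ?_
    -- show the geometric sum lies in I
    have ha : (X ^ p ^ r - 1 : Polynomial ℤ) ∈ I := by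
      rw [← geom_sum_mul]
      exact I.mul_mem_left _ hX1
    rw [← Ideal.Quotient.eq_zero_iff_mem] at ha hp' ⊢
    have h1 : (Ideal.Quotient.mk I) (X ^ p ^ r) = 1 := by
      rw [map_sub, sub_eq_zero] at ha
      simpa using ha
    rw [map_sum]
    simp only [map_pow, h1, one_pow]
    simpa using hp'
end

section
/- For all positive integers m and k, the square [m]_q^2 of the q-integer [m]_q divides [mk]_q − k·[m]_q in ℤ[q]. -/
open Polynomial Finset

lemma geom_sum_mul_factor (m k : ℕ) :
    (∑ i ∈ range (m * k), (X : Polynomial ℤ) ^ i) =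
      (∑ i ∈ range m, (X : Polynomial ℤ) ^ i) * (∑ j ∈ range k, ((X : Polynomial ℤ) ^ m) ^ j) := by
  have hX : (X : Polynomial ℤ) - 1 ≠ 0 := by
    intro h
    have := congrArg (Polynomial.eval 0) h
    simp at this
  apply mul_right_cancel₀ hX
  rw [geom_sum_mul, mul_assoc]
  have h2 : (∑ j ∈ range k, ((X : Polynomial ℤ) ^ m) ^ j) * ((X : Polynomial ℤ) ^ m - 1) =
      ((X : Polynomial ℤ) ^ m) ^ k - 1 := geom_sum_mul _ _
  have h3 : (∑ i ∈ range m, (X : Polynomial ℤ) ^ i) * ((X : Polynomial ℤ) - 1) =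
      (X : Polynomial ℤ) ^ m - 1 := geom_sum_mul _ _
  have hre : (∑ i ∈ range m, (X : Polynomial ℤ) ^ i) *
      ((∑ j ∈ range k, ((X : Polynomial ℤ) ^ m) ^ j) * ((X : Polynomial ℤ) - 1)) =
      (∑ j ∈ range k, ((X : Polynomial ℤ) ^ m) ^ j) *
      ((∑ i ∈ range m, (X : Polynomial ℤ) ^ i) * ((X : Polynomial ℤ) - 1)) := by ring
  rw [hre, h3, h2, ← pow_mul]

/-- For all positive integers `m` and `k`, the square `[m]_q^2` of the `q`-integer
`[m]_q = 1 + q + ⋯ + q^{m−1}` divides `[mk]_q − k·[m]_q` in `ℤ[q]`. -/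
theorem qInt_sq_dvd (m k : ℕ) (hm : 0 < m) (hk : 0 < k) :
    (∑ i ∈ range m, (X : Polynomial ℤ) ^ i) ^ 2 ∣
      (∑ i ∈ range (m * k), (X : Polynomial ℤ) ^ i) -
        (k : Polynomial ℤ) * ∑ i ∈ range m, (X : Polynomial ℤ) ^ i := by
  set G := ∑ i ∈ range m, (X : Polynomial ℤ) ^ i with hG
  have key : (∑ i ∈ range (m * k), (X : Polynomial ℤ) ^ i) - (k : Polynomial ℤ) * G =
      G * ((∑ j ∈ range k, ((X : Polynomial ℤ) ^ m) ^ j) - (k : Polynomial ℤ)) := by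
    rw [geom_sum_mul_factor, mul_sub, mul_comm G (k : Polynomial ℤ)]
  rw [key, sq]
  apply mul_dvd_mul_left
  have : (∑ j ∈ range k, ((X : Polynomial ℤ) ^ m) ^ j) - (k : Polynomial ℤ) =
      ∑ j ∈ range k, (((X : Polynomial ℤ) ^ m) ^ j - 1) := by
    rw [Finset.sum_sub_distrib]
    simp
  rw [this]
  apply Finset.dvd_sum
  intro j _
  have h1 : G ∣ (X : Polynomial ℤ) ^ m - 1 := ⟨(X : Polynomial ℤ) - 1, (geom_sum_mul _ _).symm⟩
  exact h1.trans (by simpa using sub_dvd_pow_sub_pow ((X : Polynomial ℤ) ^ m) 1 j)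
end

section
/- Truncation of the first q-polylogarithm: Let d ≥ 2 and m ≥ 1 be integers. Let A be the localization of ℤ[q] at the multiplicative set generated by the q-integers [k]_q for all integers k ≥ 1 with d ∤ k, and let Ā := A/([m]_q). Then in the formal power series ring Ā[[T]] one has the equality (1 − T^m) · ∑_{k ≥ 1, d ∤ k} T^k·[k]_q^{−1} = ∑_{0 < k < m, d ∤ k} T^k·[k]_q^{−1}, where the right-hand side is a polynomial of degree < m. -/
open Polynomial Finset

noncomputable section

/-- The `q`-integer `[n]_q = 1 + q + ⋯ + q^{n−1}` in `ℤ[q]`. -/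
def qInt (n : ℕ) : Polynomial ℤ := ∑ i ∈ range n, X ^ i

/-- The multiplicative subset of `ℤ[q]` generated by the `q`-integers `[k]_q` for the
integers `k ≥ 1` with `d ∤ k`. -/
def locSet (d : ℕ) : Submonoid (Polynomial ℤ) :=
  Submonoid.closure {x | ∃ k : ℕ, 1 ≤ k ∧ ¬d ∣ k ∧ x = qInt k}

/-- The localization `A` of `ℤ[q]` at the above multiplicative subset. -/
abbrev LocQ (d : ℕ) : Type := Localization (locSet d)

instance (d : ℕ) : CommRing (LocQ d) := inferInstance

instance (d : ℕ) : Algebra (Polynomial ℤ) (LocQ d) := inferInstance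

/-- The quotient `Ā := A/([m]_q)`. -/
abbrev Abar (d m : ℕ) : Type :=
  LocQ d ⧸ Ideal.span {(algebraMap (Polynomial ℤ) (LocQ d)) (qInt m)}

instance (d m : ℕ) : CommRing (Abar d m) := inferInstance

/-- The canonical ring homomorphism `ℤ[q] → Ā`. -/
def θ (d m : ℕ) : Polynomial ℤ →+* Abar d m :=
  (Ideal.Quotient.mk _).comp (algebraMap (Polynomial ℤ) (LocQ d))

/-!
If `d ∣ m`, the congruence `[k + m]_q ≡ [k]_q mod [m]_q` makes the coefficient sequence
`k ↦ [k]_q⁻¹` (extended by `0` on multiples of `d`) periodic of period `m` in `Ā`, and multiplying a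
power series with `m`-periodic coefficients by `1 - T^m` leaves exactly its truncation below
degree `m`. If `d ∤ m`, then `[m]_q` is one of the inverted `q`-integers, so `Ā = 0`.
-/

theorem PowerSeries.one_sub_X_pow_mul_mk_of_periodic {R : Type*} [Ring R] {m : ℕ}
    {f : ℕ → R} (hf : Function.Periodic f m) :
    (1 - PowerSeries.X ^ m) * PowerSeries.mk f =
      ∑ k ∈ range m, PowerSeries.C (f k) * PowerSeries.X ^ k := by
  ext n
  simp only [sub_mul, one_mul, map_sub, PowerSeries.coeff_X_pow_mul', PowerSeries.coeff_mk,
    map_sum, PowerSeries.coeff_C_mul_X_pow, sum_ite_eq, mem_range]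
  split_ifs with hmn hnm hnm
  · omega
  · rw [← hf (n - m), Nat.sub_add_cancel hmn, sub_self]
  · rw [sub_zero]
  · omega

lemma one_le_and_not_dvd_iff {d k : ℕ} : 1 ≤ k ∧ ¬d ∣ k ↔ ¬d ∣ k :=
  and_iff_right_of_imp fun h => Nat.one_le_iff_ne_zero.2 (by rintro rfl; exact h (dvd_zero d))

lemma qInt_add (a b : ℕ) : qInt (a + b) = qInt a + X ^ a * qInt b := by
  simp only [qInt, sum_range_add, mul_sum, pow_add]

lemma θ_qInt_self (d m : ℕ) : θ d m (qInt m) = 0 :=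
  Ideal.Quotient.eq_zero_iff_mem.2 (Ideal.mem_span_singleton_self _)

lemma θ_qInt_add_self (d m n : ℕ) : θ d m (qInt (n + m)) = θ d m (qInt n) := by
  rw [qInt_add, map_add, map_mul, θ_qInt_self, mul_zero, add_zero]

lemma subsingleton_Abar_of_not_dvd {d m : ℕ} (hdm : ¬d ∣ m) : Subsingleton (Abar d m) := by
  have hm : 1 ≤ m := one_le_and_not_dvd_iff.2 hdm |>.1
  have hunit : IsUnit (algebraMap (Polynomial ℤ) (LocQ d) (qInt m)) :=
    IsLocalization.map_units (LocQ d)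
      (⟨qInt m, Submonoid.subset_closure ⟨m, hm, hdm, rfl⟩⟩ : locSet d)
  exact Ideal.Quotient.subsingleton_iff.2 (Ideal.span_singleton_eq_top.2 hunit)

lemma periodic_inverse_θ_qInt (d m : ℕ) :
    Function.Periodic (fun k => if ¬d ∣ k then Ring.inverse (θ d m (qInt k)) else 0) m := by
  by_cases hdm : d ∣ m
  · intro n
    simp only [Nat.dvd_add_left hdm, θ_qInt_add_self]
  · have := subsingleton_Abar_of_not_dvd hdm
    exact fun _ => Subsingleton.elim _ _

theorem first_qpolylog_truncation_general (d m : ℕ) :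
    (1 - PowerSeries.X ^ m) *
        PowerSeries.mk
          (fun k => if 1 ≤ k ∧ ¬d ∣ k then Ring.inverse (θ d m (qInt k)) else 0) =
      ∑ k ∈ (Finset.Ioo 0 m).filter (fun k => ¬d ∣ k),
        PowerSeries.C (R := Abar d m) (Ring.inverse (θ d m (qInt k))) * PowerSeries.X ^ k := by
  simp only [one_le_and_not_dvd_iff]
  rw [PowerSeries.one_sub_X_pow_mul_mk_of_periodic (periodic_inverse_θ_qInt d m)]
  simp only [apply_ite PowerSeries.C, map_zero, ite_mul, zero_mul, ← sum_filter]
  congr 1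
  ext k
  simp only [mem_filter, mem_range, mem_Ioo]
  have := @one_le_and_not_dvd_iff d k
  tauto

/-- Truncation of the first `q`-polylogarithm: in `Ā[[T]]`, where
`Ā = ℤ[q][[k]_q^{-1} (k ≥ 1, d∤k)]/([m]_q)`, one has
`(1 − T^m) · ∑_{k ≥ 1, d∤k} T^k·[k]_q^{−1} = ∑_{0 < k < m, d∤k} T^k·[k]_q^{−1}`,
the right-hand side being a polynomial of degree `< m`. -/
theorem first_qpolylog_truncation (d m : ℕ) (hd : 2 ≤ d) (hm : 1 ≤ m) :
    (1 - PowerSeries.X ^ m) *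
        PowerSeries.mk
          (fun k => if 1 ≤ k ∧ ¬d ∣ k then Ring.inverse (θ d m (qInt k)) else 0) =
      ∑ k ∈ (Finset.Ioo 0 m).filter (fun k => ¬d ∣ k),
        PowerSeries.C (R := Abar d m) (Ring.inverse (θ d m (qInt k))) * PowerSeries.X ^ k :=
  first_qpolylog_truncation_general d m

end
end

section
/- Let R be a commutative ring, let e and m be positive integers with e dividing m, and let ξ ∈ R. Then in the quotient ring R[q]/(Φ_e(q)) one has the equality ∏_{j=0}^{m−1} (1 − q^j·ξ) = (1 − ξ^e)^{m/e}, where q denotes the image of the polynomial variable. -/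
open Polynomial Finset

/-!
Since `Φ_e ∣ q^e - 1`, the factor `1 - q^j ξ` modulo `Φ_e` depends only on `j mod e`, so the
product splits into `m/e` copies of the block `∏_{j<e} (1 - q^j ξ)`. The block is `≡ 1 - ξ^e`:
it suffices to check this for the universal `ξ = X ∈ ℤ[X]`, and there, over an algebraically
closed field, at each primitive `e`-th root of unity `μ`, where `∏_{j<e} (1 - μ^j ξ) = 1 - ξ^e`
is `X^e - ξ^e = ∏_{j<e} (X - μ^j ξ)` evaluated at `X = 1`.
-/

theorem IsPrimitiveRoot.prod_one_sub_pow_mul {K : Type*} [CommRing K] [IsDomain K] {ζ : K}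
    {e : ℕ} (hζ : IsPrimitiveRoot ζ e) (he : 0 < e) (t : K) :
    ∏ j ∈ range e, (1 - ζ ^ j * t) = 1 - t ^ e := by
  simpa [eval_prod] using (congrArg (eval 1) (X_pow_sub_C_eq_prod hζ he rfl)).symm

theorem IsPrimitiveRoot.cyclotomic_dvd_prod_one_sub_X_pow_mul_C_sub {K : Type*} [Field K]
    {ζ : K} {e : ℕ} (hζ : IsPrimitiveRoot ζ e) (he : 0 < e) (t : K) :
    cyclotomic e K ∣ ∏ j ∈ range e, (1 - X ^ j * C t) - (1 - C (t ^ e)) := by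
  rw [cyclotomic_eq_prod_X_sub_primitiveRoots hζ]
  refine prod_dvd_of_coprime (fun μ _ ν _ h ↦ pairwise_coprime_X_sub_C Function.injective_id h)
    fun μ hμ ↦ dvd_iff_isRoot.mpr ?_
  simp only [IsRoot.def, eval_sub, eval_prod, eval_one, eval_mul, eval_pow, eval_X, eval_C,
    ((mem_primitiveRoots he).mp hμ).prod_one_sub_pow_mul he, sub_self]

theorem map_prod_one_sub_X_pow_mul_C_sub {R S : Type*} [CommRing R] [CommRing S] (f : R →+* S)
    (e : ℕ) (ξ : R) :
    (∏ j ∈ range e, (1 - X ^ j * C ξ) - (1 - C (ξ ^ e))).map f =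
      ∏ j ∈ range e, (1 - X ^ j * C (f ξ)) - (1 - C (f ξ ^ e)) := by
  simp [Polynomial.map_prod]

theorem cyclotomic_dvd_prod_one_sub_X_pow_mul_C_sub_of_charZero {S : Type*} [CommRing S]
    [IsDomain S] [CharZero S] {e : ℕ} (he : 0 < e) (ξ : S) :
    cyclotomic e S ∣ ∏ j ∈ range e, (1 - X ^ j * C ξ) - (1 - C (ξ ^ e)) := by
  let K := AlgebraicClosure (FractionRing S)
  have hinj : Function.Injective (algebraMap S K) := by
    rw [IsScalarTower.algebraMap_eq S (FractionRing S) K]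
    exact (algebraMap (FractionRing S) K).injective.comp (IsFractionRing.injective S _)
  have : CharZero K := charZero_of_injective_algebraMap hinj
  have : NeZero (e : K) := ⟨Nat.cast_ne_zero.mpr he.ne'⟩
  obtain ⟨ζ, hζ⟩ := HasEnoughRootsOfUnity.exists_primitiveRoot K e
  rw [← map_dvd_map _ hinj (cyclotomic.monic e S), map_cyclotomic,
    map_prod_one_sub_X_pow_mul_C_sub]
  exact hζ.cyclotomic_dvd_prod_one_sub_X_pow_mul_C_sub he _

theorem cyclotomic_dvd_prod_one_sub_X_pow_mul_C_sub {R : Type*} [CommRing R] (e : ℕ) (ξ : R) :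
    cyclotomic e R ∣ ∏ j ∈ range e, (1 - X ^ j * C ξ) - (1 - C (ξ ^ e)) := by
  rcases e.eq_zero_or_pos with rfl | he
  · simp
  have h := Polynomial.map_dvd (aeval ξ).toRingHom
    (cyclotomic_dvd_prod_one_sub_X_pow_mul_C_sub_of_charZero he (X : ℤ[X]))
  rwa [map_cyclotomic, map_prod_one_sub_X_pow_mul_C_sub, AlgHom.toRingHom_eq_coe,
    RingHom.coe_coe, aeval_X] at h

theorem Function.Periodic.prod_range_mul {M : Type*} [CommMonoid M] {f : ℕ → M} {e : ℕ}
    (hf : Function.Periodic f e) (k : ℕ) :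
    ∏ j ∈ range (e * k), f j = (∏ j ∈ range e, f j) ^ k := by
  induction k with
  | zero => simp
  | succ k ih =>
    rw [Nat.mul_succ, prod_range_add, ih, pow_succ]
    congr 1
    exact prod_congr rfl fun j _ ↦ by
      rw [add_comm, mul_comm]; exact hf.nat_mul k j

theorem prod_one_sub_qpow_mul_general (R : Type*) [CommRing R] (e m : ℕ) (hem : e ∣ m) (ξ : R) :
    Ideal.Quotient.mk (Ideal.span {cyclotomic e R})
        (∏ j ∈ range m, (1 - X ^ j * C ξ)) =
      Ideal.Quotient.mk (Ideal.span {cyclotomic e R}) ((1 - C (ξ ^ e)) ^ (m / e)) := by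
  set mk := Ideal.Quotient.mk (Ideal.span {cyclotomic e R})
  have hX : mk X ^ e = 1 := by
    rw [← sub_eq_zero, ← map_pow, ← map_one mk, ← map_sub, Ideal.Quotient.eq_zero_iff_mem]
    exact Ideal.mem_span_singleton.mpr (cyclotomic.dvd_X_pow_sub_one e R)
  have hperiodic : Function.Periodic (fun j ↦ mk (1 - X ^ j * C ξ)) e := fun j ↦ by
    simp only [map_sub, map_mul, map_pow, pow_add, hX, mul_one]
  have hblock : mk (∏ j ∈ range e, (1 - X ^ j * C ξ)) = mk (1 - C (ξ ^ e)) :=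
    Ideal.Quotient.eq.mpr <| Ideal.mem_span_singleton.mpr <|
      cyclotomic_dvd_prod_one_sub_X_pow_mul_C_sub e ξ
  conv_lhs => rw [← Nat.mul_div_cancel' hem]
  rw [map_prod, hperiodic.prod_range_mul, ← map_prod, hblock, ← map_pow]

/-- Let `R` be a commutative ring, `e ∣ m` positive integers and `ξ ∈ R`. Then in
`R[q]/(Φ_e(q))` one has `∏_{j=0}^{m−1} (1 − q^j·ξ) = (1 − ξ^e)^{m/e}`. -/
theorem prod_one_sub_qpow_mul (R : Type*) [CommRing R] (e m : ℕ) (he : 0 < e)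
    (hm : 0 < m) (hem : e ∣ m) (ξ : R) :
    Ideal.Quotient.mk (Ideal.span {cyclotomic e R})
        (∏ j ∈ range m, (1 - X ^ j * C ξ)) =
      Ideal.Quotient.mk (Ideal.span {cyclotomic e R}) ((1 - C (ξ ^ e)) ^ (m / e)) :=
  prod_one_sub_qpow_mul_general R e m hem ξ
end
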